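/- Structure of the derivative on level sets of the direction (Lipschitz case of Proposition 3.3): Let Ω ⊆ ℝ^d be a bounded open set, m ∈ ℕ, and V : Ω → ℝ^m Lipschitz continuous (so V is Fréchet differentiable almost everywhere, with derivative DV(x) : ℝ^d → ℝ^m). Then: (i) for every v ∈ ℝ^m, DV(x) = 0 for Lebesgue-a.e. x ∈ Ω with V(x) = v; and (ii) for every unit vector e ∈ ℝ^m, (Id_{ℝ^m} − e ⊗ e) ∘ DV(x) = 0 for Lebesgue-a.e. x ∈ Ω with V(x) ≠ 0 and V(x)/‖V(x)‖ = e. -/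

import Mathlib

/-!
Where a map `f` is constant on a measurable set `s`, it is approximated on `s` by the zero linear
map, so at Lebesgue density points of `s` its derivative vanishes
(`ApproximatesLinearOn.norm_fderiv_sub_le`). Part (ii) applies this to `(Id - e ⊗ e) ∘ V`, which
vanishes wherever `V` points in direction `e`.
-/

open Set Filter Topology MeasureTheory

noncomputable section

abbrev Euc (d : ℕ) := EuclideanSpace ℝ (Fin d)

/-- The orthogonal projection of ℝ^m onto e^⊥, i.e. Id − e ⊗ e, as a continuous
linear map. -/
noncomputable def projPerp {m : ℕ} (e : Euc m) : Euc m →L[ℝ] Euc m :=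
  ContinuousLinearMap.id ℝ (Euc m) - (innerSL ℝ e).smulRight e

theorem ContinuousOn.measurableSet_inter_preimage {α β : Type*} [TopologicalSpace α]
    [MeasurableSpace α] [OpensMeasurableSpace α] [TopologicalSpace β] {f : α → β} {s : Set α}
    {t : Set β} (hf : ContinuousOn f s) (hs : MeasurableSet s) (ht : IsClosed t) :
    MeasurableSet (s ∩ f ⁻¹' t) := by
  obtain ⟨u, hu, hfu⟩ := continuousOn_iff_isClosed.1 hf t ht
  rw [inter_comm, hfu]
  exact hu.measurableSet.inter hs

section
variable {E : Type*} [NormedAddCommGroup E] [NormedSpace ℝ E] [FiniteDimensional ℝ E]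
  [MeasurableSpace E] [BorelSpace E] (μ : Measure E) [μ.IsAddHaarMeasure] {s : Set E}

theorem ae_fderiv_eq_zero_of_eqOn_const_real (hs : MeasurableSet s) {f : E → ℝ} {c : ℝ}
    (hf : EqOn f (fun _ ↦ c) s) :
    ∀ᵐ x ∂μ, x ∈ s → DifferentiableAt ℝ f x → fderiv ℝ f x = 0 := by
  nontriviality E
  obtain ⟨u, hu⟩ := exists_ne (0 : E)
  set t := s ∩ {x | DifferentiableAt ℝ f x}
  have ht : MeasurableSet t := hs.inter (measurableSet_of_differentiableAt ℝ f)
  have happrox : ApproximatesLinearOn (fun x ↦ (f x - c) • u) (0 : E →L[ℝ] E) t 0 :=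
    fun x hx y hy ↦ by simp [hf hx.1, hf hy.1]
  have hderiv : ∀ x ∈ t, HasFDerivWithinAt (fun x ↦ (f x - c) • u)
      ((fderiv ℝ f x).smulRight u) t x := fun x hx ↦
    ((hx.2.hasFDerivAt.sub_const c).smul_const u).hasFDerivWithinAt
  have hzero := (ae_restrict_iff' ht).1 (happrox.norm_fderiv_sub_le μ ht _ hderiv)
  filter_upwards [hzero] with x hx hxs hxd
  simpa [hu] using hx ⟨hxs, hxd⟩

theorem ae_fderiv_eq_zero_of_eqOn_const {F : Type*} [NormedAddCommGroup F] [NormedSpace ℝ F]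
    [FiniteDimensional ℝ F] (hs : MeasurableSet s) {f : E → F} {c : F}
    (hf : EqOn f (fun _ ↦ c) s) :
    ∀ᵐ x ∂μ, x ∈ s → DifferentiableAt ℝ f x → fderiv ℝ f x = 0 := by
  set b := Module.finBasis ℝ F
  let φ : Fin (Module.finrank ℝ F) → F →L[ℝ] ℝ :=
    fun i ↦ LinearMap.toContinuousLinearMap (b.coord i)
  have hcoord : ∀ i, ∀ᵐ x ∂μ, x ∈ s → DifferentiableAt ℝ f x →
      (φ i).comp (fderiv ℝ f x) = 0 := by
    intro i
    filter_upwards [ae_fderiv_eq_zero_of_eqOn_const_real μ hs (f := φ i ∘ f) (c := φ i c)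
      (fun x hx ↦ by simp [hf hx])] with x hx hxs hxd
    rw [← ((φ i).hasFDerivAt.comp x hxd.hasFDerivAt).fderiv]
    exact hx hxs ((φ i).differentiableAt.comp x hxd)
  filter_upwards [ae_all_iff.2 hcoord] with x hx hxs hxd
  ext1 h
  refine b.ext_elem fun i ↦ ?_
  simpa [φ] using congr($(hx i hxs hxd) h)
end

theorem projPerp_smul_self {m : ℕ} {e : Euc m} (he : ‖e‖ = 1) (r : ℝ) :
    projPerp e (r • e) = 0 := by
  simp [projPerp, he]

theorem derivative_vanishes_on_level_sets (d m : ℕ)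
    (Ω : Set (Euc d)) (hΩo : IsOpen Ω)
    (V : Euc d → Euc m) (hV : ∃ L : NNReal, LipschitzOnWith L V Ω) :
    (∀ v : Euc m, ∀ᵐ x : Euc d,
      (x ∈ Ω ∧ V x = v ∧ DifferentiableAt ℝ V x) → fderiv ℝ V x = 0) ∧
    (∀ e : Euc m, ‖e‖ = 1 → ∀ᵐ x : Euc d,
      (x ∈ Ω ∧ V x ≠ 0 ∧ ‖V x‖⁻¹ • V x = e ∧ DifferentiableAt ℝ V x) →
        (projPerp e).comp (fderiv ℝ V x) = 0) := by
  obtain ⟨L, hL⟩ := hV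
  have hcont : ContinuousOn V Ω := hL.continuousOn
  refine ⟨fun v ↦ ?_, fun e he ↦ ?_⟩
  · filter_upwards [ae_fderiv_eq_zero_of_eqOn_const volume
      (hcont.measurableSet_inter_preimage hΩo.measurableSet isClosed_singleton)
      (fun x hx ↦ hx.2)] with x hx ⟨hxΩ, hxv, hxd⟩
    exact hx ⟨hxΩ, hxv⟩ hxd
  · have hWcont : ContinuousOn (projPerp e ∘ V) Ω :=
      (projPerp e).continuous.comp_continuousOn hcont
    filter_upwards [ae_fderiv_eq_zero_of_eqOn_const volume
      (hWcont.measurableSet_inter_preimage hΩo.measurableSet isClosed_singleton)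
      (fun x hx ↦ hx.2)] with x hx ⟨hxΩ, hV0, hdir, hxd⟩
    have hVx : V x = ‖V x‖ • e := by
      rw [← hdir, smul_smul, mul_inv_cancel₀ (norm_ne_zero_iff.2 hV0), one_smul]
    rw [← ((projPerp e).hasFDerivAt.comp x hxd.hasFDerivAt).fderiv]
    refine hx ⟨hxΩ, ?_⟩ ((projPerp e).differentiableAt.comp x hxd)
    rw [mem_preimage, Function.comp_apply, hVx, projPerp_smul_self he, mem_singleton_iff]

end
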